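/- Let A be an m×q dual complex matrix and B a q×n dual complex matrix, let N_A be an NDMPI of A and N_B an NDMPI of B, and set A_e = A·N_A·A and B_e = B·N_B·B. If N_A·A·B·B*·A* = B·B*·(A_e)* and B·N_B·A*·A·B = A*·A·B_e, then (B_e)*·A*·A·B = B*·A*·A·B_e. -/

import Mathlib

open Matrix

/-- The dual complex numbers ℂ[ε] with ε² = 0 (dual numbers over ℂ). -/
abbrev DualComplex := DualNumber ℂ

/-- Conjugation on dual complex numbers: star (a + b·ε) = (conj a) + (conj b)·ε. -/
noncomputable instance : StarRing DualComplex where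
  star x := ⟨star x.fst, star x.snd⟩
  star_involutive x := TrivSqZeroExt.ext (star_star x.fst) (star_star x.snd)
  star_mul x y := TrivSqZeroExt.ext
    (by simp [TrivSqZeroExt.fst_mul]; exact mul_comm _ _)
    (by simp [TrivSqZeroExt.snd_mul]; exact (by ring : (starRingEnd ℂ) x.fst * (starRingEnd ℂ) y.snd + (starRingEnd ℂ) x.snd * (starRingEnd ℂ) y.fst = (starRingEnd ℂ) y.fst * (starRingEnd ℂ) x.snd + (starRingEnd ℂ) y.snd * (starRingEnd ℂ) x.fst))
  star_add x y := TrivSqZeroExt.ext (by simp; rfl) (by simp; rfl)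

/-- `X` is a new dual Moore–Penrose inverse (NDMPI) of `M`:
`M*·M·X·M·M* = M*·M·M*`, `X·M·X = X`, `(M·X)* = M·X`, `(X·M)* = X·M`. -/
def IsNDMPI {m n : ℕ} (M : Matrix (Fin m) (Fin n) DualComplex)
    (X : Matrix (Fin n) (Fin m) DualComplex) : Prop :=
  Mᴴ * M * X * M * Mᴴ = Mᴴ * M * Mᴴ ∧
  X * M * X = X ∧
  (M * X)ᴴ = M * X ∧
  (X * M)ᴴ = X * M

theorem Matrix.conjTranspose_mul_mul_self_of_isHermitian {l m R : Type*} [Fintype l]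
    [Fintype m] [NonUnitalSemiring R] [StarRing R] {M : Matrix l m R} {X : Matrix m l R}
    (hMX : (M * X).IsHermitian) :
    (M * X * M)ᴴ = Mᴴ * (M * X) := by
  rw [conjTranspose_mul, hMX.eq]

theorem stmt_6_general {m q n : ℕ} (A : Matrix (Fin m) (Fin q) DualComplex)
    (B : Matrix (Fin q) (Fin n) DualComplex)
    (NB : Matrix (Fin n) (Fin q) DualComplex) (hNB : IsNDMPI B NB)
    (h2 : B * NB * Aᴴ * A * B = Aᴴ * A * (B * NB * B)) :
    (B * NB * B)ᴴ * Aᴴ * A * B = Bᴴ * Aᴴ * A * (B * NB * B) := by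
  obtain ⟨-, -, hBNB, -⟩ := hNB
  calc (B * NB * B)ᴴ * Aᴴ * A * B = Bᴴ * (B * NB * Aᴴ * A * B) := by
        rw [conjTranspose_mul_mul_self_of_isHermitian hBNB]
        simp only [Matrix.mul_assoc]
    _ = Bᴴ * Aᴴ * A * (B * NB * B) := by
        rw [h2]
        simp only [Matrix.mul_assoc]

/-- If `N_A·A·B·B*·A* = B·B*·(A_e)*` and `B·N_B·A*·A·B = A*·A·B_e`,
then `(B_e)*·A*·A·B = B*·A*·A·B_e`. -/
theorem stmt_6 {m q n : ℕ} (A : Matrix (Fin m) (Fin q) DualComplex)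
    (B : Matrix (Fin q) (Fin n) DualComplex)
    (NA : Matrix (Fin q) (Fin m) DualComplex) (hNA : IsNDMPI A NA)
    (NB : Matrix (Fin n) (Fin q) DualComplex) (hNB : IsNDMPI B NB)
    (h1 : NA * A * B * Bᴴ * Aᴴ = B * Bᴴ * (A * NA * A)ᴴ)
    (h2 : B * NB * Aᴴ * A * B = Aᴴ * A * (B * NB * B)) :
    (B * NB * B)ᴴ * Aᴴ * A * B = Bᴴ * Aᴴ * A * (B * NB * B) :=
  stmt_6_general A B NB hNB h2
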